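/- Let p ≠ q be points in the plane and let a and b lie in opposite open halfplanes bounded by the line through p and q. Then b lies in the open interior of the circumdisc of p, q, a if and only if a lies in the open interior of the circumdisc of p, q, b. -/

import Mathlib

/-!
For a circle through `p`, `q`, `a` with centre `c`, the power `dist x c ^ 2 - dist p c ^ 2` of a
point `x` is determined by `p`, `q`, `a` alone: multiplied by `orient p q a` it is the in-circle
determinant `inCircle p q a x`. So `b` is strictly inside iff `orient p q a * inCircle p q a b < 0`.
The determinant is alternating in its last two rows, and `orient p q a`, `orient p q b` have
opposite signs, so this condition is symmetric in `a` and `b`.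
-/

noncomputable section

/-- Points of the Euclidean plane. -/
abbrev Pt := EuclideanSpace ℝ (Fin 2)

/-- The orientation (cross product) determinant of the triple `(p, q, r)`. -/
def orient (p q r : Pt) : ℝ :=
  (q 0 - p 0) * (r 1 - p 1) - (q 1 - p 1) * (r 0 - p 0)

def inCircle (p q a b : Pt) : ℝ :=
  Matrix.det !![q 0 - p 0, q 1 - p 1, dist q p ^ 2;
                a 0 - p 0, a 1 - p 1, dist a p ^ 2;
                b 0 - p 0, b 1 - p 1, dist b p ^ 2]

lemma dist_sq_eq_coords (x y : Pt) : dist x y ^ 2 = (x 0 - y 0) ^ 2 + (x 1 - y 1) ^ 2 := by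
  simp [PiLp.dist_sq_eq_of_L2, Fin.sum_univ_two, Real.dist_eq, sq_abs]

lemma inCircle_swap (p q a b : Pt) : inCircle p q b a = -inCircle p q a b := by
  simp only [inCircle, Matrix.det_fin_three, Matrix.of_apply, Matrix.cons_val',
    Matrix.cons_val_zero, Matrix.cons_val_fin_one, Matrix.cons_val_one, Matrix.cons_val]
  ring

lemma orient_eq_zero_of_collinear {p q a : Pt} (h : Collinear ℝ {p, q, a}) :
    orient p q a = 0 := by
  obtain ⟨v, hv⟩ := (collinear_iff_of_mem (Set.mem_insert p _)).1 h
  obtain ⟨s, rfl⟩ := hv q (by simp)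
  obtain ⟨t, rfl⟩ := hv a (by simp)
  simp only [orient, vadd_eq_add, PiLp.add_apply, PiLp.smul_apply, smul_eq_mul]
  ring

lemma exists_equidistant_of_orient_ne_zero {p q a : Pt} (h : orient p q a ≠ 0) :
    ∃ c : Pt, dist q c = dist p c ∧ dist a c = dist p c := by
  have hind : AffineIndependent ℝ ![p, q, a] :=
    affineIndependent_iff_not_collinear_set.2 (mt orient_eq_zero_of_collinear h)
  let s : Affine.Simplex ℝ Pt 2 := ⟨_, hind⟩
  exact ⟨s.circumcenter,
    (s.dist_circumcenter_eq_circumradius 1).trans (s.dist_circumcenter_eq_circumradius 0).symm,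
    (s.dist_circumcenter_eq_circumradius 2).trans (s.dist_circumcenter_eq_circumradius 0).symm⟩

lemma orient_mul_sq_dist_sub_eq_inCircle {p q a b c : Pt} (hq : dist q c = dist p c)
    (ha : dist a c = dist p c) :
    orient p q a * (dist b c ^ 2 - dist p c ^ 2) = inCircle p q a b := by
  have hq' := congrArg (· ^ 2) hq
  have ha' := congrArg (· ^ 2) ha
  simp only [dist_sq_eq_coords] at hq' ha'
  simp only [orient, inCircle, Matrix.det_fin_three, dist_sq_eq_coords, Matrix.of_apply,
    Matrix.cons_val', Matrix.cons_val_zero, Matrix.cons_val_fin_one, Matrix.cons_val_one,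
    Matrix.cons_val]
  linear_combination
    ((q 0 - p 0) * (b 1 - p 1) - (q 1 - p 1) * (b 0 - p 0)) * ha'
      - ((a 0 - p 0) * (b 1 - p 1) - (a 1 - p 1) * (b 0 - p 0)) * hq'

lemma exists_circle_through_inside_iff {p q a b : Pt} (h : orient p q a ≠ 0) :
    (∃ c : Pt, ∃ ρ : ℝ, dist p c = ρ ∧ dist q c = ρ ∧ dist a c = ρ ∧ dist b c < ρ) ↔
      orient p q a * inCircle p q a b < 0 := by
  constructor
  · rintro ⟨c, ρ, rfl, hq, ha, hb⟩
    rw [← orient_mul_sq_dist_sub_eq_inCircle hq ha, ← mul_assoc, ← sq]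
    exact mul_neg_of_pos_of_neg (sq_pos_of_ne_zero h)
      (sub_neg.2 (pow_lt_pow_left₀ hb dist_nonneg two_ne_zero))
  · intro hneg
    obtain ⟨c, hq, ha⟩ := exists_equidistant_of_orient_ne_zero h
    refine ⟨c, dist p c, rfl, hq, ha, ?_⟩
    rw [← orient_mul_sq_dist_sub_eq_inCircle hq ha, ← mul_assoc, ← sq] at hneg
    exact lt_of_pow_lt_pow_left₀ 2 dist_nonneg
      (sub_neg.1 (neg_of_mul_neg_right hneg (sq_nonneg _)))

lemma mul_neg_iff_mul_neg_neg {x y z : ℝ} (h : x * y < 0) : x * z < 0 ↔ y * -z < 0 := by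
  rcases mul_neg_iff.1 h with ⟨hx, hy⟩ | ⟨hx, hy⟩ <;> constructor <;> intro h' <;> nlinarith

theorem stmt7_general (p q a b : Pt)
    (hab : orient p q a * orient p q b < 0) :
    (∃ c : Pt, ∃ ρ : ℝ, dist p c = ρ ∧ dist q c = ρ ∧ dist a c = ρ ∧ dist b c < ρ) ↔
      (∃ c : Pt, ∃ ρ : ℝ, dist p c = ρ ∧ dist q c = ρ ∧ dist b c = ρ ∧ dist a c < ρ) := by
  rw [exists_circle_through_inside_iff (left_ne_zero_of_mul hab.ne),
    exists_circle_through_inside_iff (right_ne_zero_of_mul hab.ne), inCircle_swap p q a b]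
  exact mul_neg_iff_mul_neg_neg hab

/-- If `a` and `b` lie in opposite open halfplanes bounded by the line through the
distinct points `p` and `q`, then `b` lies in the open interior of the circumdisc of
`p, q, a` iff `a` lies in the open interior of the circumdisc of `p, q, b`. -/
theorem stmt7 (p q a b : Pt) (hpq : p ≠ q)
    (hab : orient p q a * orient p q b < 0) :
    (∃ c : Pt, ∃ ρ : ℝ, dist p c = ρ ∧ dist q c = ρ ∧ dist a c = ρ ∧ dist b c < ρ) ↔
      (∃ c : Pt, ∃ ρ : ℝ, dist p c = ρ ∧ dist q c = ρ ∧ dist b c = ρ ∧ dist a c < ρ) :=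
  stmt7_general p q a b hab
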